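/- Let ε > 0, r ∈ (0,1], and y > ε. Then M_P(y + ε − rε, y + ε) ≥ M_P(y − ε + rε, y − ε). -/

import Mathlib

noncomputable def MP (z lam : ℝ) : ℝ := z - lam + z * Real.log (lam / z)

/-! The inequality reduces to `a log (1 + s/a) + (b + s) log (1 + s/b) ≥ 2s` with `s = rε`,
`a = y + ε - s ≥ b = y - ε > 0`. Bounding both logarithms by the first term `2x/(x + 2)` of the
series `log (1 + x) = 2 ∑ (x/(x+2))^(2k+1)/(2k+1)` leaves `s/(2a + s) ≤ s/(2b + s)`, which is
`b ≤ a`. -/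

open Real

theorem two_mul_div_add_two_le_log_one_add {x : ℝ} (hx : 0 ≤ x) :
    2 * x / (x + 2) ≤ log (1 + x) := by
  have h := le_hasSum (hasSum_log_one_add hx) 0 fun k _ => by positivity
  simpa [mul_div_assoc] using h

theorem MP_add_right {a : ℝ} (s : ℝ) (ha : 0 < a) :
    MP a (a + s) = a * log (1 + s / a) - s := by
  rw [MP, add_div, div_self ha.ne']
  ring

theorem MP_add_left {b s : ℝ} (hb : 0 < b) (hbs : 0 < b + s) :
    MP (b + s) b = s - (b + s) * log (1 + s / b) := by
  have : b / (b + s) = (1 + s / b)⁻¹ := by field_simp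
  rw [MP, this, log_inv]
  ring

theorem two_mul_le_mul_log_add_mul_log {a b s : ℝ} (hb : 0 < b) (hba : b ≤ a) (hs : 0 ≤ s) :
    2 * s ≤ a * log (1 + s / a) + (b + s) * log (1 + s / b) := by
  have ha : 0 < a := hb.trans_le hba
  have bound_a := mul_le_mul_of_nonneg_left
    (two_mul_div_add_two_le_log_one_add (div_nonneg hs ha.le)) ha.le
  have bound_b := mul_le_mul_of_nonneg_left
    (two_mul_div_add_two_le_log_one_add (div_nonneg hs hb.le)) (add_pos_of_pos_of_nonneg hb hs).le
  have eq_a : a * (2 * (s / a) / (s / a + 2)) = 2 * s * a / (2 * a + s) := by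
    field_simp; ring
  have eq_b : (b + s) * (2 * (s / b) / (s / b + 2)) = 2 * s * (b + s) / (2 * b + s) := by
    field_simp; ring
  have key : 2 * s ≤ 2 * s * a / (2 * a + s) + 2 * s * (b + s) / (2 * b + s) := by
    rw [div_add_div _ _ (by positivity) (by positivity), le_div_iff₀ (by positivity)]
    nlinarith [mul_nonneg (mul_nonneg hs hs) (sub_nonneg.2 hba)]
  linarith

theorem mp_abs_error_ineq (ε r y : ℝ) (hε : 0 < ε) (hr0 : 0 < r) (hr1 : r ≤ 1)
    (hy : ε < y) :
    MP (y + ε - r * ε) (y + ε) ≥ MP (y - ε + r * ε) (y - ε) := by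
  have hs : 0 < r * ε := mul_pos hr0 hε
  have hsε : r * ε ≤ ε := mul_le_of_le_one_left hε.le hr1
  have hb : 0 < y - ε := sub_pos.2 hy
  have lhs := MP_add_right (r * ε) (show 0 < y + ε - r * ε by linarith)
  have rhs := MP_add_left hb (show 0 < y - ε + r * ε by linarith)
  rw [sub_add_cancel] at lhs
  rw [ge_iff_le, lhs, rhs]
  linarith [two_mul_le_mul_log_add_mul_log hb (show y - ε ≤ y + ε - r * ε by linarith) hs.le]
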